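/- Let P = ⟨1/p : p prime⟩ be the Puiseux monoid generated by the reciprocals of the primes. Then P is atomic with A(P) = {1/p : p prime}, and ρ_k(P) = ∞ for all sufficiently large k. -/

import Mathlib

/-- A Puiseux monoid: an additive submonoid of ℚ consisting of nonnegative rationals. -/
def PM.Puiseux (P : AddSubmonoid ℚ) : Prop := ∀ x ∈ P, 0 ≤ x

/-- `a` is an atom of `P`. -/
def PM.IsAtom (P : AddSubmonoid ℚ) (a : ℚ) : Prop :=
  a ∈ P ∧ a ≠ 0 ∧ ∀ x ∈ P, ∀ y ∈ P, a = x + y → x = 0 ∨ y = 0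

/-- A factorization of `x` is a multiset of atoms of `P` summing to `x`. -/
def PM.IsFactorization (P : AddSubmonoid ℚ) (x : ℚ) (z : Multiset ℚ) : Prop :=
  (∀ a ∈ z, PM.IsAtom P a) ∧ z.sum = x

/-- The set of lengths of `x`. -/
def PM.Lengths (P : AddSubmonoid ℚ) (x : ℚ) : Set ℕ :=
  {n | ∃ z : Multiset ℚ, PM.IsFactorization P x z ∧ Multiset.card z = n}

/-- `P` is atomic: it is generated by its set of atoms. -/
def PM.Atomic (P : AddSubmonoid ℚ) : Prop :=
  AddSubmonoid.closure {a | PM.IsAtom P a} = P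

/-- The union of sets of lengths `U_k(P)`. -/
def PM.U (P : AddSubmonoid ℚ) (k : ℕ) : Set ℕ :=
  {l | ∃ x ∈ P, k ∈ PM.Lengths P x ∧ l ∈ PM.Lengths P x}

/-!
The `p`-adic norm of `1/p` is `p`, while `1/q` has `p`-adic norm `1` for every prime `q ≠ p`;
since the norm is non-archimedean, the only way to write `1/p` as a sum of reciprocals of primes
is `1/p` itself, so every generator is an atom. For the lengths, the element `k • (1/2) + 1`
has the factorization `k • (1/2) + p • (1/p)` of length `k + p` for every prime `p`, among them
one of length `k + 2`.
-/

open Multiset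

def primeReciprocals : Set ℚ := {q | ∃ p : ℕ, p.Prime ∧ q = 1 / p}

local notation "𝒫" => AddSubmonoid.closure primeReciprocals

namespace PM

variable {S : Set ℚ} {P : AddSubmonoid ℚ}

theorem mem_of_isAtom_closure {a : ℚ} (ha : IsAtom (AddSubmonoid.closure S) a) : a ∈ S := by
  obtain ⟨hmem, hne, hsplit⟩ := ha
  obtain ⟨l, hlS, rfl⟩ := AddSubmonoid.exists_multiset_of_mem_closure hmem
  induction l using Multiset.induction with
  | empty => exact absurd sum_zero hne
  | cons b l ih =>
    have hlS' : ∀ y ∈ l, y ∈ S := fun y hy => hlS y (mem_cons_of_mem hy)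
    have hl : l.sum ∈ AddSubmonoid.closure S :=
      AddSubmonoid.multiset_sum_mem _ _ fun y hy => AddSubmonoid.subset_closure (hlS' y hy)
    rw [sum_cons] at hne hsplit ⊢
    rcases hsplit b (AddSubmonoid.subset_closure (hlS b (mem_cons_self b l))) l.sum hl rfl
      with hb | hl0
    · rw [hb, zero_add] at hne hsplit ⊢
      exact ih hlS' hl hne hsplit
    · rw [hl0, add_zero]
      exact hlS b (mem_cons_self b l)

theorem setOf_isAtom_closure_eq (h : ∀ a ∈ S, IsAtom (AddSubmonoid.closure S) a) :
    {a | IsAtom (AddSubmonoid.closure S) a} = S :=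
  Set.Subset.antisymm (fun _ => mem_of_isAtom_closure) h

theorem IsFactorization.mem {x : ℚ} {z : Multiset ℚ} (hz : IsFactorization P x z) : x ∈ P :=
  hz.2 ▸ AddSubmonoid.multiset_sum_mem _ _ fun a ha => (hz.1 a ha).1

theorem IsFactorization.add {x y : ℚ} {z w : Multiset ℚ} (hz : IsFactorization P x z)
    (hw : IsFactorization P y w) : IsFactorization P (x + y) (z + w) :=
  ⟨fun a ha => (mem_add.1 ha).elim (hz.1 a) (hw.1 a), by rw [sum_add, hz.2, hw.2]⟩

theorem isFactorization_replicate {a : ℚ} (ha : IsAtom P a) (n : ℕ) :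
    IsFactorization P (n • a) (replicate n a) :=
  ⟨fun _ hb => eq_of_mem_replicate hb ▸ ha, sum_replicate n a⟩

end PM

theorem pos_of_mem_primeReciprocals {a : ℚ} (ha : a ∈ primeReciprocals) : 0 < a := by
  obtain ⟨q, hq, rfl⟩ := ha
  have : (0 : ℚ) < q := mod_cast hq.pos
  positivity

theorem padicNorm_le_one_of_mem_primeReciprocals {p : ℕ} [Fact p.Prime] {a : ℚ}
    (ha : a ∈ primeReciprocals) (hap : a ≠ 1 / p) : padicNorm p a ≤ 1 := by
  obtain ⟨q, hq, rfl⟩ := ha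
  have : Fact q.Prime := ⟨hq⟩
  have hpq : p ≠ q := by rintro rfl; exact hap rfl
  rw [padicNorm.div, padicNorm.one, padicNorm.padicNorm_of_prime_of_ne hpq, div_one]

theorem eq_singleton_of_sum_eq_one_div_prime {p : ℕ} (hp : p.Prime) {l : Multiset ℚ}
    (hl : ∀ a ∈ l, a ∈ primeReciprocals) (hsum : l.sum = 1 / p) : l = {(1 / p : ℚ)} := by
  have : Fact p.Prime := ⟨hp⟩
  by_cases hpl : 1 / (p : ℚ) ∈ l
  · obtain ⟨l', rfl⟩ := exists_cons_of_mem hpl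
    have hl'0 : l'.sum = 0 := by simpa using hsum
    suffices l' = 0 by subst this; rfl
    refine eq_zero_of_forall_notMem fun b hb => ?_
    have hpos : ∀ c ∈ l', 0 < c :=
      fun c hc => pos_of_mem_primeReciprocals (hl c (mem_cons_of_mem hc))
    have := single_le_sum (fun c hc => (hpos c hc).le) b hb
    linarith [hpos b hb]
  · have hne : l ≠ 0 := by
      rintro rfl
      simp [eq_comm, hp.ne_zero] at hsum
    obtain ⟨b, hb, hle⟩ := IsNonarchimedean.multiset_image_add_of_nonempty
      (f := padicNorm p) (fun _ _ => padicNorm.nonarchimedean) id hne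
    have hb1 := padicNorm_le_one_of_mem_primeReciprocals (hl b hb) (fun h => hpl (h ▸ hb))
    rw [map_id, hsum, padicNorm.div, padicNorm.one, padicNorm.padicNorm_p_of_prime,
      one_div, inv_inv] at hle
    have : (1 : ℚ) < p := mod_cast hp.one_lt
    exact absurd (hle.trans hb1) (not_le.2 this)

theorem isAtom_closure_primeReciprocals {a : ℚ} (ha : a ∈ primeReciprocals) :
    PM.IsAtom 𝒫 a := by
  refine ⟨AddSubmonoid.subset_closure ha, (pos_of_mem_primeReciprocals ha).ne', ?_⟩
  obtain ⟨p, hp, rfl⟩ := ha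
  rintro x hx y hy hxy
  obtain ⟨l, hl, rfl⟩ := AddSubmonoid.exists_multiset_of_mem_closure hx
  obtain ⟨m, hm, rfl⟩ := AddSubmonoid.exists_multiset_of_mem_closure hy
  have hlm : l + m = {1 / (p : ℚ)} :=
    eq_singleton_of_sum_eq_one_div_prime hp (fun a ha => (mem_add.1 ha).elim (hl a) (hm a))
      (by rw [sum_add, hxy])
  have hcard : card l + card m = 1 := by simpa using congrArg card hlm
  rcases Nat.add_eq_one_iff.1 hcard with ⟨hl0, -⟩ | ⟨-, hm0⟩
  · left; rw [card_eq_zero.1 hl0, sum_zero]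
  · right; rw [card_eq_zero.1 hm0, sum_zero]

theorem setOf_isAtom_closure_primeReciprocals : {a | PM.IsAtom 𝒫 a} = primeReciprocals :=
  PM.setOf_isAtom_closure_eq fun _ => isAtom_closure_primeReciprocals

theorem add_prime_mem_lengths (k : ℕ) {p : ℕ} (hp : p.Prime) :
    k + p ∈ PM.Lengths 𝒫 (k • (1 / 2 : ℚ) + 1) := by
  have hatom : ∀ q : ℕ, q.Prime → PM.IsAtom 𝒫 (1 / q) :=
    fun q hq => isAtom_closure_primeReciprocals ⟨q, hq, rfl⟩
  have hp1 : p • (1 / p : ℚ) = 1 := by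
    rw [nsmul_eq_mul, mul_one_div_cancel (Nat.cast_ne_zero.2 hp.ne_zero)]
  refine ⟨_, hp1 ▸ (PM.isFactorization_replicate (hatom 2 Nat.prime_two) k).add
    (PM.isFactorization_replicate (hatom p hp) p), ?_⟩
  simp

theorem U_closure_primeReciprocals_infinite (k : ℕ) : (PM.U 𝒫 (k + 2)).Infinite := by
  have hsub : (k + ·) '' {p : ℕ | p.Prime} ⊆ PM.U 𝒫 (k + 2) := by
    rintro _ ⟨p, hp, rfl⟩
    obtain ⟨z, hz, hzk⟩ := add_prime_mem_lengths k Nat.prime_two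
    exact ⟨_, hz.mem, ⟨z, hz, hzk⟩, add_prime_mem_lengths k hp⟩
  exact ((Nat.infinite_setOfPred_prime).image (add_right_injective k).injOn).mono hsub

theorem stmt7 :
    let A : Set ℚ := {q | ∃ p : ℕ, p.Prime ∧ q = 1 / p}
    let P := AddSubmonoid.closure A
    PM.Atomic P ∧ {a : ℚ | PM.IsAtom P a} = A ∧
      ∃ d : ℕ, ∀ k ≥ d, (PM.U P k).Infinite := by
  intro A P
  have hatoms : {a | PM.IsAtom P a} = A := setOf_isAtom_closure_primeReciprocals
  refine ⟨by rw [PM.Atomic, hatoms], hatoms, 2, fun k hk => ?_⟩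
  obtain ⟨j, rfl⟩ := Nat.exists_eq_add_of_le' hk
  exact U_closure_primeReciprocals_infinite j
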